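/- Let n ≥ 2, let a₀ and b₀ be commuting (n−1)×(n−1) complex matrices, let α, β be complex numbers, let u, v be complex column vectors of length n−1, and set a₁ = a₀ − α·I, b₁ = b₀ − β·I. Form the n×n block matrices a = [[a₀, u],[0, α]] and b = [[b₀, v],[0, β]]. Then exp(a+b) = exp(a)·exp(b) if and only if (φ(a₁+b₁) − φ(a₁))·u = (exp(a₁)·φ(b₁) − φ(a₁+b₁))·v, where for a square matrix m, φ(m) = Σ_{k≥0} m^k/(k+1)!. -/

import Mathlib

open Matrix

/-- `φ` applied to a square complex matrix: `φ(m) = Σ_{k≥0} m^k / (k+1)!`,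
the power series of `φ(z) = (e^z - 1)/z` (with `φ(0) = 1`). -/
noncomputable def matPhi {m : Type*} [Fintype m] [DecidableEq m]
    (A : Matrix m m ℂ) : Matrix m m ℂ :=
  ∑' k : ℕ, (((k + 1).factorial : ℂ))⁻¹ • A ^ k

/-!
Write `a = α • 1 + a'` with `a' = [[a₁, u], [0, 0]]`, and likewise `b = β • 1 + b'`. The scalar
parts are central, so the factor `e^(α+β)` cancels from both sides and the question becomes whether
`exp (a' + b') = exp a' * exp b'`. Since `[[A, B], [0, 0]] ^ (k + 1) = [[A ^ (k + 1), A ^ k * B],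
[0, 0]]`, the exponential of such a matrix is `[[exp A, φ(A) * B], [0, 1]]`. The upper-left blocks
then agree because `a₁` and `b₁` commute, and comparing the upper-right blocks
`φ(a₁ + b₁) * (u + v) = exp a₁ * φ(b₁) * v + φ(a₁) * u` gives the identity.
-/

open scoped Nat
open NormedSpace

theorem HasSum.matrix_fromBlocks {ι R l m n o : Type*} [AddCommMonoid R] [TopologicalSpace R]
    {fA : ι → Matrix n l R} {fB : ι → Matrix n m R} {fC : ι → Matrix o l R}
    {fD : ι → Matrix o m R} {A : Matrix n l R} {B : Matrix n m R} {C : Matrix o l R}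
    {D : Matrix o m R} (hA : HasSum fA A) (hB : HasSum fB B) (hC : HasSum fC C)
    (hD : HasSum fD D) :
    HasSum (fun i => fromBlocks (fA i) (fB i) (fC i) (fD i)) (fromBlocks A B C D) := by
  refine Pi.hasSum.2 fun i => Pi.hasSum.2 fun j => ?_
  rcases i with i | i <;> rcases j with j | j
  exacts [Pi.hasSum.1 (Pi.hasSum.1 hA i) j, Pi.hasSum.1 (Pi.hasSum.1 hB i) j,
    Pi.hasSum.1 (Pi.hasSum.1 hC i) j, Pi.hasSum.1 (Pi.hasSum.1 hD i) j]

namespace Matrix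

theorem fromBlocks_of_const_eq_smul_one_add {m R : Type*} [DecidableEq m] [Ring R]
    (A : Matrix m m R) (B : Matrix m Unit R) (α : R) :
    fromBlocks A B (0 : Matrix Unit m R) (of fun _ _ => α) =
      α • 1 + fromBlocks (A - α • 1) B 0 0 := by
  ext (i | i) (j | j) <;> simp [one_apply]

variable {m n : Type*} [Fintype m] [DecidableEq m]

theorem hasSum_exp (A : Matrix m m ℂ) :
    HasSum (fun k => ((k ! : ℂ))⁻¹ • A ^ k) (exp A) :=
  open scoped Norms.Operator in exp_series_hasSum_exp' A

theorem hasSum_matPhi (A : Matrix m m ℂ) :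
    HasSum (fun k => (((k + 1)! : ℂ))⁻¹ • A ^ k) (matPhi A) := by
  open scoped Norms.Operator in
  refine Summable.hasSum (.of_norm_bounded (norm_expSeries_summable' (𝕂 := ℂ) A) fun k => ?_)
  rw [norm_smul, norm_smul]
  gcongr
  simp only [norm_inv, Complex.norm_natCast]
  gcongr
  exact Nat.le_succ k

theorem exp_smul_one (α : ℂ) : exp (α • (1 : Matrix m m ℂ)) = Complex.exp α • 1 := by
  open scoped Norms.Operator in
  have h := algebraMap_exp_comm (𝔸 := Matrix m m ℂ) α
  rw [Algebra.algebraMap_eq_smul_one, Algebra.algebraMap_eq_smul_one,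
    ← Complex.exp_eq_exp_ℂ] at h
  exact h.symm

theorem exp_smul_one_add (α : ℂ) (X : Matrix m m ℂ) :
    exp (α • 1 + X) = Complex.exp α • exp X := by
  rw [exp_add_of_commute _ _ ((Commute.one_left X).smul_left α), exp_smul_one, smul_one_mul]

variable [Fintype n] [DecidableEq n]

theorem fromBlocks_zero_zero_pow_succ {R : Type*} [Semiring R] (A : Matrix m m R)
    (B : Matrix m n R) (k : ℕ) :
    fromBlocks A B (0 : Matrix n m R) 0 ^ (k + 1) = fromBlocks (A ^ (k + 1)) (A ^ k * B) 0 0 := by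
  induction k with
  | zero => simp
  | succ k ih =>
    rw [pow_succ', ih, fromBlocks_multiply]
    simp [pow_succ' A, Matrix.mul_assoc]

theorem exp_fromBlocks_zero_zero (A : Matrix m m ℂ) (B : Matrix m n ℂ) :
    exp (fromBlocks A B (0 : Matrix n m ℂ) 0) = fromBlocks (exp A) (matPhi A * B) 0 1 := by
  have hA : HasSum (fun k => (((k + 1)! : ℂ))⁻¹ • A ^ (k + 1)) (exp A - 1) := by
    simpa using (hasSum_nat_add_iff' 1).2 (hasSum_exp A)
  have hB : HasSum (fun k => (((k + 1)! : ℂ))⁻¹ • (A ^ k * B)) (matPhi A * B) := by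
    simpa only [Function.comp_def, addMonoidHomMulRight_apply, Matrix.smul_mul] using
      (hasSum_matPhi A).map (addMonoidHomMulRight B) (continuous_id.matrix_mul continuous_const)
  have hsucc : HasSum (fun k => (((k + 1)! : ℂ))⁻¹ • fromBlocks A B (0 : Matrix n m ℂ) 0 ^ (k + 1))
      (fromBlocks (exp A - 1) (matPhi A * B) 0 0) := by
    simp_rw [fromBlocks_zero_zero_pow_succ, fromBlocks_smul, smul_zero]
    exact hA.matrix_fromBlocks hB hasSum_zero hasSum_zero
  have h := (hasSum_nat_add_iff
    (f := fun k => ((k ! : ℂ))⁻¹ • fromBlocks A B (0 : Matrix n m ℂ) 0 ^ k) 1).1 hsucc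
  rw [Finset.sum_range_one, pow_zero, Nat.factorial_zero, Nat.cast_one, inv_one, one_smul,
    ← fromBlocks_one, fromBlocks_add, sub_add_cancel, zero_add, zero_add, add_zero] at h
  exact (hasSum_exp _).unique h

end Matrix

theorem exp_add_eq_exp_mul_exp_iff_general (n : ℕ)
    (a₀ b₀ : Matrix (Fin (n - 1)) (Fin (n - 1)) ℂ)
    (hcomm : a₀ * b₀ = b₀ * a₀)
    (α β : ℂ) (u v : Matrix (Fin (n - 1)) Unit ℂ)
    (a₁ b₁ : Matrix (Fin (n - 1)) (Fin (n - 1)) ℂ)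
    (ha₁ : a₁ = a₀ - α • 1) (hb₁ : b₁ = b₀ - β • 1)
    (a b : Matrix (Fin (n - 1) ⊕ Unit) (Fin (n - 1) ⊕ Unit) ℂ)
    (hA : a = Matrix.fromBlocks a₀ u 0 (Matrix.of fun _ _ => α))
    (hB : b = Matrix.fromBlocks b₀ v 0 (Matrix.of fun _ _ => β)) :
    NormedSpace.exp (a + b) = NormedSpace.exp a * NormedSpace.exp b ↔
      (matPhi (a₁ + b₁) - matPhi a₁) * u =
        (NormedSpace.exp a₁ * matPhi b₁ - matPhi (a₁ + b₁)) * v := by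
  have hcomm₁ : Commute a₁ b₁ := by
    rw [ha₁, hb₁]
    exact (Commute.sub_right hcomm ((Commute.one_right a₀).smul_right β)).sub_left
      ((Commute.one_left _).smul_left α)
  rw [hA, hB, fromBlocks_of_const_eq_smul_one_add, fromBlocks_of_const_eq_smul_one_add, ← ha₁,
    ← hb₁, add_add_add_comm, ← add_smul, fromBlocks_add, exp_smul_one_add, exp_smul_one_add,
    exp_smul_one_add, smul_mul_smul_comm, ← Complex.exp_add,
    (smul_right_injective _ (Complex.exp_ne_zero _)).eq_iff, add_zero, add_zero,
    exp_fromBlocks_zero_zero, exp_fromBlocks_zero_zero, exp_fromBlocks_zero_zero,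
    fromBlocks_multiply, fromBlocks_inj]
  simp only [exp_add_of_commute _ _ hcomm₁, Matrix.mul_zero, Matrix.zero_mul, Matrix.mul_one,
    add_zero, zero_add, true_and, and_true]
  rw [Matrix.mul_add, Matrix.sub_mul, Matrix.sub_mul, Matrix.mul_assoc, sub_eq_sub_iff_add_eq_add]

/-- Equation (6): with `a = [[a₀, u], [0, α]]`, `b = [[b₀, v], [0, β]]`,
`a₁ = a₀ - α • I`, `b₁ = b₀ - β • I` and `a₀ * b₀ = b₀ * a₀`, one has
`exp (a + b) = exp a * exp b` iff
`(φ(a₁+b₁) - φ(a₁)) * u = (exp a₁ * φ(b₁) - φ(a₁+b₁)) * v`. -/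
theorem exp_add_eq_exp_mul_exp_iff (n : ℕ) (hn : 2 ≤ n)
    (a₀ b₀ : Matrix (Fin (n - 1)) (Fin (n - 1)) ℂ)
    (hcomm : a₀ * b₀ = b₀ * a₀)
    (α β : ℂ) (u v : Matrix (Fin (n - 1)) Unit ℂ)
    (a₁ b₁ : Matrix (Fin (n - 1)) (Fin (n - 1)) ℂ)
    (ha₁ : a₁ = a₀ - α • 1) (hb₁ : b₁ = b₀ - β • 1)
    (a b : Matrix (Fin (n - 1) ⊕ Unit) (Fin (n - 1) ⊕ Unit) ℂ)
    (hA : a = Matrix.fromBlocks a₀ u 0 (Matrix.of fun _ _ => α))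
    (hB : b = Matrix.fromBlocks b₀ v 0 (Matrix.of fun _ _ => β)) :
    NormedSpace.exp (a + b) = NormedSpace.exp a * NormedSpace.exp b ↔
      (matPhi (a₁ + b₁) - matPhi a₁) * u =
        (NormedSpace.exp a₁ * matPhi b₁ - matPhi (a₁ + b₁)) * v :=
  exp_add_eq_exp_mul_exp_iff_general n a₀ b₀ hcomm α β u v a₁ b₁ ha₁ hb₁ a b hA hB
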